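/- Let K be a field, n ≥ 1, and x_1, …, x_{n+1} ∈ K with x_i ≠ 0 and x_i ≠ 1 for all i, and suppose x_1 x_2 ⋯ x_{n+1} = 1. Write π_i = x_1 x_2 ⋯ x_i and let w = Σ_{i=1}^{n} (1 − π_i) ε_i ∈ K^n, where ε_1, …, ε_n is the standard basis. Then w ≠ 0 and T_i w = w for every specialized reduced Gassner matrix T_i, 1 ≤ i ≤ n. -/

import Mathlib

/-- `T` is the family of specialized reduced Gassner matrices for the parameters `x`:
on the standard basis (`0`-based indices), `T i ε_{i-1} = ε_{i-1} + x_i (1 - x_{i+1}) ε_i`,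
`T i ε_i = x_i x_{i+1} ε_i`, `T i ε_{i+1} = (1 - x_i) ε_i + ε_{i+1}`, and `T i ε_j = ε_j`
for `|i - j| ≥ 2`. -/
def IsGassnerMatrices {K : Type*} [Field K] {n : ℕ} (x : Fin (n + 1) → K)
    (T : Fin n → Matrix (Fin n) (Fin n) K) : Prop :=
  ∀ i k : Fin n,
    (T i).mulVec (Pi.single k 1) =
      if k = i then (x i.castSucc * x i.succ) • (Pi.single i 1 : Fin n → K)
      else if (k : ℕ) + 1 = (i : ℕ) then
        (Pi.single k 1 : Fin n → K) + (x i.castSucc * (1 - x i.succ)) • (Pi.single i 1 : Fin n → K)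
      else if (k : ℕ) = (i : ℕ) + 1 then
        (1 - x i.castSucc) • (Pi.single i 1 : Fin n → K) + (Pi.single k 1 : Fin n → K)
      else (Pi.single k 1 : Fin n → K)

/-!
Extend `w` to `w̃ = (1 - π_m)_{0 ≤ m ≤ n+1}`; the two new entries vanish because `π_0 = 1` and
`π_{n+1} = x_1 ⋯ x_{n+1} = 1`. The matrix `T_i` only changes the `i`-th coordinate, to
`x_i (1 - x_{i+1}) w̃_{i-1} + x_i x_{i+1} w̃_i + (1 - x_i) w̃_{i+1}`, and with `π_i = π_{i-1} x_i`,
`π_{i+1} = π_i x_{i+1}` this is `w̃_i` by a polynomial identity. Finally `w_1 = 1 - x_1 ≠ 0`.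
-/

open Finset Matrix

namespace Fin

variable {M : Type*} {n : ℕ}

theorem partialProd_eq_prod_filter [CommMonoid M] (f : Fin n → M) (i : Fin (n + 1)) :
    partialProd f i = ∏ j : Fin n with j.val < i.val, f j :=
  List.prod_take_ofFn f i

theorem prod_Iic_eq_partialProd_succ [CommMonoid M] (f : Fin n → M) (a : Fin n) :
    ∏ j ∈ Iic a, f j = partialProd f a.succ := by
  rw [partialProd_eq_prod_filter]
  refine prod_congr (Finset.ext fun j => ?_) fun _ _ => rfl
  simp only [Finset.mem_Iic, mem_filter, mem_univ, true_and, le_def, val_succ]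
  omega

theorem partialProd_last [CommMonoid M] (f : Fin n → M) :
    partialProd f (last n) = ∏ j, f j := by
  simp [partialProd_eq_prod_filter]

theorem sum_univ_eq_sum_castSucc_succ [AddCommMonoid M] {g : Fin (n + 2) → M}
    (h0 : g 0 = 0) (hlast : g (last _) = 0) :
    ∑ m, g m = ∑ k : Fin n, g k.castSucc.succ := by
  rw [sum_univ_castSucc, sum_univ_succ]
  simp [h0, hlast]

end Fin

section Gassner

variable {K : Type*} [Field K] {n : ℕ}

/-- Row `i` of `T i`, indexed by `Fin (n + 2)` so that the neighbours `i - 1` and `i + 1` of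
the diagonal entry always exist: column `k` of `T i` is entry `k + 1`. -/
def gassnerRow (x : Fin (n + 1) → K) (i : Fin n) : Fin (n + 2) → K :=
  Pi.single i.castSucc.castSucc (x i.castSucc * (1 - x i.succ)) +
    Pi.single i.castSucc.succ (x i.castSucc * x i.succ) + Pi.single i.succ.succ (1 - x i.castSucc)

namespace IsGassnerMatrices

variable {x : Fin (n + 1) → K} {T : Fin n → Matrix (Fin n) (Fin n) K}

theorem apply_of_ne (hT : IsGassnerMatrices x T) {i j : Fin n} (hji : j ≠ i) (k : Fin n) :
    T i j k = (1 : Matrix (Fin n) (Fin n) K) j k := by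
  have h := congrFun (hT i k) j
  rw [mulVec_single_one, col_apply] at h
  rw [h, one_apply]
  split_ifs <;> simp_all [eq_comm]

theorem apply_self (hT : IsGassnerMatrices x T) (i k : Fin n) :
    T i i k = gassnerRow x i k.castSucc.succ := by
  have h := congrFun (hT i k) i
  rw [mulVec_single_one, col_apply] at h
  rw [h, gassnerRow]
  simp only [ite_apply, Pi.add_apply, Pi.smul_apply, Pi.single_apply, Fin.ext_iff, smul_eq_mul,
    Fin.val_succ, Fin.val_castSucc]
  split_ifs <;> first | ring1 | (exfalso; omega)

theorem mulVec_apply_of_ne (hT : IsGassnerMatrices x T) (v : Fin n → K) {i j : Fin n}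
    (hji : j ≠ i) : (T i *ᵥ v) j = v j := by
  simp only [mulVec, dotProduct, hT.apply_of_ne hji, one_apply, ite_mul, one_mul, zero_mul,
    sum_ite_eq, mem_univ, if_true]

theorem mulVec_apply_self (hT : IsGassnerMatrices x T) {u : Fin (n + 2) → K} (h0 : u 0 = 0)
    (hlast : u (Fin.last _) = 0) (i : Fin n) :
    (T i *ᵥ fun k => u k.castSucc.succ) i = gassnerRow x i ⬝ᵥ u := by
  rw [mulVec, dotProduct, dotProduct, Fin.sum_univ_eq_sum_castSucc_succ (by simp [h0])
    (by simp [hlast])]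
  simp only [hT.apply_self]

theorem mulVec_one_sub_partialProd (hT : IsGassnerMatrices x T) (hprod : ∏ i, x i = 1)
    (i : Fin n) :
    T i *ᵥ (fun k => 1 - Fin.partialProd x k.castSucc.succ) =
      fun k => 1 - Fin.partialProd x k.castSucc.succ := by
  funext j
  rcases eq_or_ne j i with rfl | hji
  · refine (hT.mulVec_apply_self (u := fun m => 1 - Fin.partialProd x m) (by simp)
      (by simp [Fin.partialProd_last, hprod]) j).trans ?_
    simp only [gassnerRow, add_dotProduct, single_dotProduct]
    rw [Fin.partialProd_succ x j.succ, ← Fin.succ_castSucc, Fin.partialProd_succ x j.castSucc]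
    ring
  · exact hT.mulVec_apply_of_ne _ hji

end IsGassnerMatrices

end Gassner

theorem stmt_14_general (K : Type*) [Field K] (n : ℕ) (hn : 1 ≤ n)
    (x : Fin (n + 1) → K) (h1 : ∀ i, x i ≠ 1)
    (hprod : ∏ i, x i = 1)
    (T : Fin n → Matrix (Fin n) (Fin n) K) (hT : IsGassnerMatrices x T)
    (w : Fin n → K) (hw : ∀ i : Fin n, w i = 1 - ∏ j ∈ Finset.Iic i.castSucc, x j) :
    w ≠ 0 ∧ ∀ i : Fin n, (T i).mulVec w = w := by
  obtain rfl : w = fun k => 1 - Fin.partialProd x k.castSucc.succ :=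
    funext fun k => by rw [hw, Fin.prod_Iic_eq_partialProd_succ]
  refine ⟨fun hzero => h1 0 ?_, hT.mulVec_one_sub_partialProd hprod⟩
  have h : 1 - Fin.partialProd x (0 : Fin (n + 1)).succ = 0 := congrFun hzero ⟨0, hn⟩
  rwa [Fin.partialProd_succ, Fin.castSucc_zero, Fin.partialProd_zero, one_mul, sub_eq_zero,
    eq_comm] at h

/-- Suppose `x₁ x₂ ⋯ x_{n+1} = 1`. With `π_i = x₁ x₂ ⋯ x_i`, the vector
`w = Σᵢ (1 - π_i) εᵢ ∈ K^n` is a nonzero vector fixed by every specialized reduced Gassner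
matrix `T i`. -/
theorem stmt_14 (K : Type*) [Field K] (n : ℕ) (hn : 1 ≤ n)
    (x : Fin (n + 1) → K) (h0 : ∀ i, x i ≠ 0) (h1 : ∀ i, x i ≠ 1)
    (hprod : ∏ i, x i = 1)
    (T : Fin n → Matrix (Fin n) (Fin n) K) (hT : IsGassnerMatrices x T)
    (w : Fin n → K) (hw : ∀ i : Fin n, w i = 1 - ∏ j ∈ Finset.Iic i.castSucc, x j) :
    w ≠ 0 ∧ ∀ i : Fin n, (T i).mulVec w = w :=
  stmt_14_general K n hn x h1 hprod T hT w hw
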